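/- arXiv:1907.04580 — 2 statements merged into one kernel-verified Lean document; each statement's English description precedes it below -/
import Mathlib

section
/- Let P₀, P₁, Q ∈ ℝ^{n×n} be symmetric with Q positive semidefinite, R ∈ ℝ^{m×m} symmetric positive definite, B ∈ ℝ^{n×m}, and E ∈ ℝ^{n×n} invertible, satisfying the Riccati step E^{-⊤} P₀ E^{-1} − P₁ = Q − P₁ B (R + Bᵀ P₁ B)^{-1} Bᵀ P₁. Define the feedback F := −(R + Bᵀ P₁ B)^{-1} Bᵀ P₁ and, for x ∈ ℝ^n, the closed-loop update x⁺ := (I + B F) E x. Then ⟨P₁ x⁺, x⁺⟩ ≤ ⟨P₀ x, x⟩ − ⟨Q E x, E x⟩ for all x ∈ ℝ^n. -/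
/-!
Write `S = R + Bᵀ P₁ B`, `K = S⁻¹ Bᵀ P₁` and `y = E x`. Expanding `(I - B K)ᵀ P₁ (I - B K)` and using
`Kᵀ S K = P₁ B S⁻¹ Bᵀ P₁` gives `P₁ - P₁ B S⁻¹ Bᵀ P₁ - Kᵀ R K`, which by the Riccati step equals
`E⁻ᵀ P₀ E⁻¹ - Q - Kᵀ R K`. Evaluating the quadratic forms at `y` and dropping `⟨R K y, K y⟩ ≥ 0`
gives the inequality.
-/

open Matrix

namespace Matrix

variable {ι κ α : Type*} [Fintype ι] [Fintype κ] [DecidableEq κ] [CommRing α]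

/-- Also true for singular `A`, where `A⁻¹ = 0`. -/
theorem nonsing_inv_mul_mul_nonsing_inv (A : Matrix κ κ α) : A⁻¹ * A * A⁻¹ = A⁻¹ := by
  by_cases h : IsUnit A.det
  · rw [nonsing_inv_mul A h, Matrix.one_mul]
  · rw [nonsing_inv_apply_not_isUnit A h, Matrix.mul_zero]

omit [DecidableEq κ] in
theorem transpose_mul_mul_mulVec_dotProduct (A : Matrix ι κ α) (P : Matrix ι ι α) (v : κ → α) :
    (Aᵀ * P * A) *ᵥ v ⬝ᵥ v = P *ᵥ (A *ᵥ v) ⬝ᵥ A *ᵥ v := by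
  rw [← mulVec_mulVec, ← mulVec_mulVec, mulVec_transpose, ← dotProduct_mulVec]

end Matrix

section Riccati

variable {ι κ α : Type*} [Fintype ι] [Fintype κ] [DecidableEq κ] [CommRing α]
  {P : Matrix ι ι α} {R : Matrix κ κ α}

/-- The feedback `F` of the Riccati step is `-riccatiGain P₁ R B`. -/
noncomputable def riccatiGain (P : Matrix ι ι α) (R : Matrix κ κ α) (B : Matrix ι κ α) :
    Matrix κ ι α :=
  (R + Bᵀ * P * B)⁻¹ * Bᵀ * P

theorem riccatiGain_transpose (hP : P.IsSymm) (hR : R.IsSymm) (B : Matrix ι κ α) :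
    (riccatiGain P R B)ᵀ = P * B * (R + Bᵀ * P * B)⁻¹ := by
  have hS : (R + Bᵀ * P * B).IsSymm := hR.add <| by
    simp only [IsSymm, transpose_mul, transpose_transpose, hP.eq, Matrix.mul_assoc]
  rw [riccatiGain, transpose_mul, transpose_mul, transpose_nonsing_inv, hS.eq, hP.eq,
    transpose_transpose]
  simp only [Matrix.mul_assoc]

theorem riccatiGain_transpose_mul_mul (hP : P.IsSymm) (hR : R.IsSymm) (B : Matrix ι κ α) :
    (riccatiGain P R B)ᵀ * (R + Bᵀ * P * B) * riccatiGain P R B =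
      P * B * (R + Bᵀ * P * B)⁻¹ * Bᵀ * P := by
  rw [riccatiGain_transpose hP hR, riccatiGain]
  calc P * B * (R + Bᵀ * P * B)⁻¹ * (R + Bᵀ * P * B) * ((R + Bᵀ * P * B)⁻¹ * Bᵀ * P)
      = P * B * ((R + Bᵀ * P * B)⁻¹ * (R + Bᵀ * P * B) * (R + Bᵀ * P * B)⁻¹) * Bᵀ * P := by
        simp only [Matrix.mul_assoc]
    _ = P * B * (R + Bᵀ * P * B)⁻¹ * Bᵀ * P := by rw [nonsing_inv_mul_mul_nonsing_inv]

theorem one_sub_mul_riccatiGain_transpose_mul_mul [DecidableEq ι] (hP : P.IsSymm) (hR : R.IsSymm)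
    (B : Matrix ι κ α) :
    (1 - B * riccatiGain P R B)ᵀ * P * (1 - B * riccatiGain P R B) =
      P - P * B * (R + Bᵀ * P * B)⁻¹ * Bᵀ * P - (riccatiGain P R B)ᵀ * R * riccatiGain P R B := by
  have hPBK : P * B * riccatiGain P R B = P * B * (R + Bᵀ * P * B)⁻¹ * Bᵀ * P := by
    simp only [riccatiGain, Matrix.mul_assoc]
  have hKBP : (riccatiGain P R B)ᵀ * Bᵀ * P = P * B * (R + Bᵀ * P * B)⁻¹ * Bᵀ * P := by
    rw [riccatiGain_transpose hP hR]
  have hKSK := riccatiGain_transpose_mul_mul hP hR B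
  generalize riccatiGain P R B = K at *
  generalize P * B * (R + Bᵀ * P * B)⁻¹ * Bᵀ * P = G at *
  calc (1 - B * K)ᵀ * P * (1 - B * K)
      = P - P * B * K - Kᵀ * Bᵀ * P + (Kᵀ * (R + Bᵀ * P * B) * K - Kᵀ * R * K) := by
        simp only [transpose_sub, transpose_one, transpose_mul, Matrix.sub_mul, Matrix.mul_sub,
          Matrix.mul_add, Matrix.add_mul, Matrix.one_mul, Matrix.mul_one, Matrix.mul_assoc]
        abel
    _ = P - G - Kᵀ * R * K := by rw [hPBK, hKBP, hKSK]; abel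

end Riccati

theorem stmt_4_general (n m : ℕ) (P₀ P₁ Q : Matrix (Fin n) (Fin n) ℝ)
    (R : Matrix (Fin m) (Fin m) ℝ) (B : Matrix (Fin n) (Fin m) ℝ)
    (E : Matrix (Fin n) (Fin n) ℝ)
    (hP₁ : P₁.IsSymm)
    (hR : R.PosDef) (hE : IsUnit E)
    (hRic : (E⁻¹)ᵀ * P₀ * E⁻¹ - P₁ =
      Q - P₁ * B * (R + Bᵀ * P₁ * B)⁻¹ * Bᵀ * P₁) :
    ∀ x : Fin n → ℝ,
      P₁.mulVec (((1 : Matrix (Fin n) (Fin n) ℝ) + B * (-(R + Bᵀ * P₁ * B)⁻¹ * Bᵀ * P₁)).mulVec (E.mulVec x)) ⬝ᵥ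
        (((1 : Matrix (Fin n) (Fin n) ℝ) + B * (-(R + Bᵀ * P₁ * B)⁻¹ * Bᵀ * P₁)).mulVec (E.mulVec x)) ≤
      (P₀.mulVec x ⬝ᵥ x) - (Q.mulVec (E.mulVec x) ⬝ᵥ E.mulVec x) := by
  intro x
  have hR_symm : R.IsSymm := isHermitian_iff_isSymm.mp hR.isHermitian
  have hx : E⁻¹ *ᵥ (E *ᵥ x) = x := by
    rw [mulVec_mulVec, nonsing_inv_mul E ((isUnit_iff_isUnit_det E).mp hE), one_mulVec]
  have h_closedLoop : 1 + B * (-(R + Bᵀ * P₁ * B)⁻¹ * Bᵀ * P₁) = 1 - B * riccatiGain P₁ R B := by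
    rw [riccatiGain, Matrix.neg_mul, Matrix.neg_mul, Matrix.mul_neg, sub_eq_add_neg]
  have h_riccati : P₁ - P₁ * B * (R + Bᵀ * P₁ * B)⁻¹ * Bᵀ * P₁ = (E⁻¹)ᵀ * P₀ * E⁻¹ - Q := by
    rw [sub_eq_iff_eq_add.mp hRic]; abel
  have h_gain_nonneg : 0 ≤ ((riccatiGain P₁ R B)ᵀ * R * riccatiGain P₁ R B) *ᵥ (E *ᵥ x) ⬝ᵥ E *ᵥ x := by
    rw [transpose_mul_mul_mulVec_dotProduct, dotProduct_comm]
    simpa using hR.posSemidef.dotProduct_mulVec_nonneg (riccatiGain P₁ R B *ᵥ E *ᵥ x)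
  have h_P₀ : P₀ *ᵥ x ⬝ᵥ x = ((E⁻¹)ᵀ * P₀ * E⁻¹) *ᵥ (E *ᵥ x) ⬝ᵥ E *ᵥ x := by
    rw [transpose_mul_mul_mulVec_dotProduct, hx]
  rw [h_closedLoop, ← transpose_mul_mul_mulVec_dotProduct,
    one_sub_mul_riccatiGain_transpose_mul_mul hP₁ hR_symm, h_riccati, h_P₀]
  simp only [sub_mulVec, sub_dotProduct]
  linarith

/-- One-step Lyapunov decrease for the Riccati feedback
`F = -(R + Bᵀ P₁ B)⁻¹ Bᵀ P₁` and closed-loop update `x⁺ = (I + B F) E x`. -/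
theorem stmt_4 (n m : ℕ) (P₀ P₁ Q : Matrix (Fin n) (Fin n) ℝ)
    (R : Matrix (Fin m) (Fin m) ℝ) (B : Matrix (Fin n) (Fin m) ℝ)
    (E : Matrix (Fin n) (Fin n) ℝ)
    (hP₀ : P₀.IsSymm) (hP₁ : P₁.IsSymm) (hQsymm : Q.IsSymm) (hQ : Q.PosSemidef)
    (hR : R.PosDef) (hE : IsUnit E)
    (hRic : (E⁻¹)ᵀ * P₀ * E⁻¹ - P₁ =
      Q - P₁ * B * (R + Bᵀ * P₁ * B)⁻¹ * Bᵀ * P₁) :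
    ∀ x : Fin n → ℝ,
      P₁.mulVec (((1 : Matrix (Fin n) (Fin n) ℝ) + B * (-(R + Bᵀ * P₁ * B)⁻¹ * Bᵀ * P₁)).mulVec (E.mulVec x)) ⬝ᵥ
        (((1 : Matrix (Fin n) (Fin n) ℝ) + B * (-(R + Bᵀ * P₁ * B)⁻¹ * Bᵀ * P₁)).mulVec (E.mulVec x)) ≤
      (P₀.mulVec x ⬝ᵥ x) - (Q.mulVec (E.mulVec x) ⬝ᵥ E.mulVec x) :=
  stmt_4_general n m P₀ P₁ Q R B E hP₁ hR hE hRic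
end

section
/- Let A ∈ ℂ^{n×n} and B ∈ ℂ^{n×m} satisfy the Kalman rank condition Rank(B, AB, …, A^{n−1}B) = n. Then Rank(λ I_n − A, B) = n for every λ ∈ ℂ. -/
/-! A row vector `x` with `x (λI - A, B) = 0` is a left eigenvector of `A` for `λ` with `x B = 0`,
hence `x A^k B = λ^k x B = 0` for every `k`: `x` annihilates the Kalman matrix, and full row rank
of the latter forces `x = 0`. -/

open Matrix

namespace Matrix

variable {m n K R : Type*}

theorem rank_eq_card_iff_vecMul_eq_zero [Field K] [Fintype m] [Fintype n] (M : Matrix m n K) :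
    M.rank = Fintype.card m ↔ ∀ x : m → K, x ᵥ* M = 0 → x = 0 := by
  rw [rank_eq_finrank_span_row, eq_comm, ← Set.finrank,
    ← linearIndependent_iff_card_eq_finrank_span, ← vecMul_injective_iff, ← coe_vecMulLinear,
    injective_iff_map_eq_zero]
  rfl

section CommSemiring

variable [CommSemiring R] [Fintype n] [DecidableEq n]

theorem vecMul_pow_of_vecMul_eq_smul {A : Matrix n n R} {x : n → R} {lam : R}
    (h : x ᵥ* A = lam • x) (k : ℕ) : x ᵥ* A ^ k = lam ^ k • x := by
  induction k with
  | zero => simp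
  | succ k ih => rw [pow_succ, ← vecMul_vecMul, ih, smul_vecMul, h, smul_smul, pow_succ]

def kalmanMatrix (A : Matrix n n R) (B : Matrix n m R) (k : ℕ) : Matrix n (Fin k × m) R :=
  of fun i p => (A ^ (p.1 : ℕ) * B) i p.2

theorem vecMul_kalmanMatrix_eq_zero [Fintype m] {A : Matrix n n R} {B : Matrix n m R}
    {x : n → R} {lam : R}
    (hA : x ᵥ* A = lam • x) (hB : x ᵥ* B = 0) (k : ℕ) : x ᵥ* kalmanMatrix A B k = 0 := by
  ext p
  have : x ᵥ* (A ^ (p.1 : ℕ) * B) = 0 := by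
    rw [← vecMul_vecMul, vecMul_pow_of_vecMul_eq_smul hA, smul_vecMul, hB, smul_zero]
  exact congr_fun this p.2

end CommSemiring

theorem vecMul_fromCols_smul_one_sub_eq_zero_iff [CommRing R] [Fintype n] [DecidableEq n]
    (A : Matrix n n R) (B : Matrix n m R) (x : n → R) (lam : R) :
    x ᵥ* fromCols (lam • 1 - A) B = 0 ↔ x ᵥ* A = lam • x ∧ x ᵥ* B = 0 := by
  rw [vecMul_fromCols, ← Sum.elim_zero_zero, Sum.elim_eq_iff, vecMul_sub, vecMul_smul, vecMul_one,
    sub_eq_zero, eq_comm]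

end Matrix

/-- Kalman rank condition implies the Hautus rank condition at every `λ ∈ ℂ`.
The Kalman matrix `(B, AB, …, A^{n−1}B)` is indexed by `Fin n × Fin m`. -/
theorem stmt_14 (n m : ℕ) (A : Matrix (Fin n) (Fin n) ℂ)
    (B : Matrix (Fin n) (Fin m) ℂ)
    (hKalman : (Matrix.of fun i (p : Fin n × Fin m) =>
      ((A ^ (p.1 : ℕ)) * B) i p.2).rank = n) :
    ∀ lam : ℂ,
      (Matrix.fromCols (lam • (1 : Matrix (Fin n) (Fin n) ℂ) - A) B).rank = n := by
  intro lam
  have hKalman_inj := (kalmanMatrix A B n).rank_eq_card_iff_vecMul_eq_zero.1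
    (hKalman.trans (Fintype.card_fin n).symm)
  refine (rank_eq_card_iff_vecMul_eq_zero _ |>.2 fun x hx => ?_).trans (Fintype.card_fin n)
  obtain ⟨hA, hB⟩ := (vecMul_fromCols_smul_one_sub_eq_zero_iff A B x lam).1 hx
  exact hKalman_inj x (vecMul_kalmanMatrix_eq_zero hA hB n)
end
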